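/- arXiv:1902.05244 — 3 statements merged into one kernel-verified Lean document; each statement's English description precedes it below -/
import Mathlib

section
/- On a constant curvature c space, let H be the operator defined on skew-symmetric endomorphisms by H_X F = c·k·F(X) and on vectors by H_Y w = (c/2)(Y∧w). Then [H_Y, H_X]F := H_Y(H_X F) − H_X(H_Y F) = ck(H_Y F(X) − H_X F(Y)) = −(1/2)c²k[F, X∧Y], so that R(X,Y)F := [R(X,Y),F] + [H_Y,H_X]F = −(1/2)c(2−ck)[X∧Y, F]. -/
open scoped RealInnerProductSpace

variable {V : Type*} [NormedAddCommGroup V] [InnerProductSpace ℝ V] [FiniteDimensional ℝ V]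

/-- The wedge endomorphism `X ∧ Y : Z ↦ ⟨Y,Z⟩X − ⟨X,Z⟩Y`. -/
noncomputable def wedge (X Y : V) : V →L[ℝ] V :=
  (innerSL ℝ Y).smulRight X - (innerSL ℝ X).smulRight Y

lemma key {V : Type*} [NormedAddCommGroup V] [InnerProductSpace ℝ V]
    (F : V →L[ℝ] V) (hF : ∀ u v : V, ⟪F u, v⟫ = -⟪u, F v⟫) (X Y : V) :
    wedge Y (F X) - wedge X (F Y) = wedge X Y ∘L F - F ∘L wedge X Y := by
  ext Z
  simp only [wedge, ContinuousLinearMap.sub_apply, ContinuousLinearMap.coe_comp',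
    Function.comp_apply, ContinuousLinearMap.smulRight_apply, innerSL_apply_apply, map_sub, map_smul]
  rw [hF X Z, hF Y Z]
  module

/-- On a constant curvature `c` space, with `H_X w = (c/2)·X∧w` and `H_X F = c·k·F(X)` for
skew-symmetric `F`, one has `[H_Y,H_X]F = ck(H_Y(F X) − H_X(F Y)) = −(1/2)c²k·[F, X∧Y]`, so that
`R(X,Y)F := [R(X,Y),F] + [H_Y,H_X]F = −(1/2)c(2−ck)·[X∧Y, F]` where `R(X,Y) = −c·X∧Y`. -/
theorem stmt6 (c k : ℝ) (F : V →L[ℝ] V) (hF : ∀ u v : V, ⟪F u, v⟫ = -⟪u, F v⟫) (X Y : V) :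
    ((c * k) • ((c / 2) • wedge Y (F X) : V →L[ℝ] V)
        - (c * k) • ((c / 2) • wedge X (F Y) : V →L[ℝ] V)
      = (-(1 / 2) * c ^ 2 * k) • (F ∘L wedge X Y - wedge X Y ∘L F)) ∧
    ((((-c) • wedge X Y : V →L[ℝ] V) ∘L F - F ∘L ((-c) • wedge X Y : V →L[ℝ] V))
        + ((c * k) • ((c / 2) • wedge Y (F X) : V →L[ℝ] V)
            - (c * k) • ((c / 2) • wedge X (F Y) : V →L[ℝ] V))
      = (-(1 / 2) * c * (2 - c * k)) • (wedge X Y ∘L F - F ∘L wedge X Y)) := by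
  have h := key F hF X Y
  constructor
  · simp only [← smul_sub, h]
    module
  · simp only [← smul_sub, h, ContinuousLinearMap.smul_comp, ContinuousLinearMap.comp_smul]
    module
end

section
/- Let V be a 2-dimensional inner product space with the curvature of the round 2-sphere R(X,Y)W = ⟨X,W⟩Y − ⟨Y,W⟩X. For X, Y, Z, u ∈ V with |X|²+|Z|²=|Y|²=|u|²=1, ⟨X,Y⟩=0, ⟨Z,u⟩=0, the quantity ⟨R(X,Y)X,Y⟩ − (3/4)|R(X,Y)u|² + (1/4)|R(Z,u)Y|² equals 1/4. -/
open scoped RealInnerProductSpace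

lemma key15 {V : Type*} [NormedAddCommGroup V] [InnerProductSpace ℝ V]
    (hdim : Module.finrank ℝ V = 2) (a b w : V) (hb : ‖b‖ = 1) (hab : ⟪a, b⟫ = 0) :
    ⟪a, w⟫ ^ 2 + ⟪b, w⟫ ^ 2 * ‖a‖ ^ 2 = ‖a‖ ^ 2 * ‖w‖ ^ 2 := by
  by_cases ha : a = 0
  · simp [ha]
  have hb2 : ⟪b, b⟫ = 1 := by
    rw [real_inner_self_eq_norm_sq, hb]; norm_num
  have ha2 : ⟪a, a⟫ = ‖a‖ ^ 2 := real_inner_self_eq_norm_sq a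
  have hba : ⟪b, a⟫ = 0 := by rw [real_inner_comm]; exact hab
  have hane : ⟪a, a⟫ ≠ 0 := by
    rw [ha2]
    have := norm_pos_iff.2 ha
    positivity
  set v := (‖a‖ ^ 2) • w - ⟪a, w⟫ • a - (⟪b, w⟫ * ‖a‖ ^ 2) • b with hv
  have hva : ⟪v, a⟫ = 0 := by
    simp only [hv, inner_sub_left, real_inner_smul_left, ha2, hba, real_inner_comm w a]
    ring
  have hvb : ⟪v, b⟫ = 0 := by
    simp only [hv, inner_sub_left, real_inner_smul_left, hb2, hab, real_inner_comm w b]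
    ring
  have hli : LinearIndependent ℝ ![a, b] := by
    rw [LinearIndependent.pair_iff]
    intro s t hst
    have h1 : ⟪a, s • a + t • b⟫ = 0 := by rw [hst]; simp
    have h2 : ⟪b, s • a + t • b⟫ = 0 := by rw [hst]; simp
    simp only [inner_add_right, real_inner_smul_right, hab, hba, hb2, ha2] at h1 h2
    constructor
    · have : s * ‖a‖ ^ 2 = 0 := by linarith
      rcases mul_eq_zero.1 this with h | h
      · exact h
      · exact absurd h (by rw [← ha2] at *; exact hane)
    · linarith
  haveI : FiniteDimensional ℝ V := FiniteDimensional.of_finrank_eq_succ hdim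
  have hspan : Submodule.span ℝ (Set.range ![a, b]) = ⊤ := by
    apply Submodule.eq_top_of_finrank_eq
    rw [finrank_span_eq_card hli, hdim]
    simp
  have hv0 : v = 0 := by
    have hmem : v ∈ (Submodule.span ℝ (Set.range ![a, b]))ᗮ := by
      rw [Submodule.mem_orthogonal]
      intro x hx
      induction hx using Submodule.span_induction with
      | mem x hx =>
        rcases hx with ⟨i, rfl⟩
        fin_cases i
        · simpa [real_inner_comm] using hva
        · simpa [real_inner_comm] using hvb
      | zero => simp
      | add x y _ _ h1 h2 => rw [inner_add_left, h1, h2]; ring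
      | smul c x _ h1 => rw [real_inner_smul_left, h1]; ring
    rw [hspan, Submodule.top_orthogonal_eq_bot, Submodule.mem_bot] at hmem
    exact hmem
  have : ⟪v, w⟫ = 0 := by rw [hv0]; simp
  simp only [hv, inner_sub_left, real_inner_smul_left, real_inner_self_eq_norm_sq] at this
  linear_combination -this

/-- In a 2-dimensional inner product space with the round-sphere curvature
`R(X,Y)W = ⟨X,W⟩Y − ⟨Y,W⟩X`, for vectors with `|X|²+|Z|² = |Y|² = |u|² = 1`, `⟨X,Y⟩ = 0`,
`⟨Z,u⟩ = 0`, the quantity `⟨R(X,Y)X,Y⟩ − (3/4)|R(X,Y)u|² + (1/4)|R(Z,u)Y|²` equals `1/4`. -/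
theorem stmt15 {V : Type*} [NormedAddCommGroup V] [InnerProductSpace ℝ V]
    (hdim : Module.finrank ℝ V = 2)
    (R : V → V → V → V) (hR : ∀ A B W : V, R A B W = ⟪A, W⟫ • B - ⟪B, W⟫ • A)
    (X Y Z u : V) (h1 : ‖X‖ ^ 2 + ‖Z‖ ^ 2 = 1) (h2 : ‖Y‖ = 1) (h3 : ‖u‖ = 1)
    (h4 : ⟪X, Y⟫ = 0) (h5 : ⟪Z, u⟫ = 0) :
    ⟪R X Y X, Y⟫ - (3 / 4) * ‖R X Y u‖ ^ 2 + (1 / 4) * ‖R Z u Y‖ ^ 2 = 1 / 4 := by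
  have hYX : ⟪Y, X⟫ = 0 := by rw [real_inner_comm]; exact h4
  have huZ : ⟪u, Z⟫ = 0 := by rw [real_inner_comm]; exact h5
  have hY2 : ⟪Y, Y⟫ = 1 := by rw [real_inner_self_eq_norm_sq, h2]; norm_num
  have hu2 : ⟪u, u⟫ = 1 := by rw [real_inner_self_eq_norm_sq, h3]; norm_num
  have hX2 : ⟪X, X⟫ = ‖X‖ ^ 2 := real_inner_self_eq_norm_sq X
  have hZ2 : ⟪Z, Z⟫ = ‖Z‖ ^ 2 := real_inner_self_eq_norm_sq Z
  -- term 1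
  have t1 : ⟪R X Y X, Y⟫ = ‖X‖ ^ 2 := by
    rw [hR]
    simp only [inner_sub_left, real_inner_smul_left, hX2, h4, hY2]
    ring
  -- term 2
  have k1 : ⟪X, u⟫ ^ 2 + ⟪Y, u⟫ ^ 2 * ‖X‖ ^ 2 = ‖X‖ ^ 2 := by
    have := key15 hdim X Y u h2 h4
    rw [h3] at this; linarith [this]
  have t2 : ‖R X Y u‖ ^ 2 = ‖X‖ ^ 2 := by
    rw [hR, ← real_inner_self_eq_norm_sq]
    simp only [inner_sub_left, inner_sub_right, real_inner_smul_left, real_inner_smul_right,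
      hY2, hX2, h4, hYX]
    nlinarith [k1]
  -- term 3
  have k2 : ⟪Z, Y⟫ ^ 2 + ⟪u, Y⟫ ^ 2 * ‖Z‖ ^ 2 = ‖Z‖ ^ 2 := by
    have := key15 hdim Z u Y h3 h5
    rw [h2] at this; linarith [this]
  have t3 : ‖R Z u Y‖ ^ 2 = ‖Z‖ ^ 2 := by
    rw [hR, ← real_inner_self_eq_norm_sq]
    simp only [inner_sub_left, inner_sub_right, real_inner_smul_left, real_inner_smul_right,
      hu2, hZ2, h5, huZ]
    nlinarith [k2]
  rw [t1, t2, t3]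
  linarith [h1]
end

section
/- Let g = k ⊕ p be a Lie algebra with [p,p] ⊆ k and let Φ: k → so(p) be the restriction of ad to p (a Lie algebra homomorphism on the ideal structure). If Φ_{[p,p]} commutes with the orthogonal complement (Φ_k)^⊥ in so(p) (with respect to the trace form −tr(AB)) and [p,p] is an ideal of k, then Φ_{[p,p]} is an ideal of the Lie algebra so(p). -/
open scoped RealInnerProductSpace

/-!
On skew-symmetric endomorphisms the trace form `-tr(C ∘ D)` is the Hilbert–Schmidt inner product
`∑ᵢ ⟪C bᵢ, D bᵢ⟫`, hence positive definite, so it is nondegenerate on `Φ(𝔨)` and every skew `A`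
splits as `A = Φ X + C` with `C` orthogonal to `Φ(𝔨)`. Such a `C` is skew and, by hypothesis,
commutes with `Φ(𝔦)`; therefore `[A, Φ Y] = [Φ X, Φ Y] = Φ ⁅X, Y⁆` with `⁅X, Y⁆ ∈ 𝔦`.
-/

section NegTraceForm

variable {W : Type*} [NormedAddCommGroup W] [InnerProductSpace ℝ W]

noncomputable def negTraceForm : LinearMap.BilinForm ℝ (Module.End ℝ W) :=
  -(LinearMap.mul ℝ (Module.End ℝ W)).compr₂ (LinearMap.trace ℝ W)

lemma negTraceForm_apply (C D : Module.End ℝ W) :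
    negTraceForm C D = -LinearMap.trace ℝ W (C ∘ₗ D) :=
  rfl

lemma negTraceForm_isSymm : (negTraceForm (W := W)).IsSymm :=
  ⟨fun C D => by
    simp only [negTraceForm_apply]
    exact congrArg Neg.neg (LinearMap.trace_mul_comm ℝ C D)⟩

lemma negTraceForm_eq_sum_inner {ι : Type*} [Fintype ι] (b : OrthonormalBasis ι ℝ W)
    {C : Module.End ℝ W} (hC : ∀ u v : W, ⟪C u, v⟫ = -⟪u, C v⟫) (D : Module.End ℝ W) :
    negTraceForm C D = ∑ i, ⟪C (b i), D (b i)⟫ := by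
  rw [negTraceForm_apply, LinearMap.trace_eq_sum_inner _ b, ← Finset.sum_neg_distrib]
  refine Finset.sum_congr rfl fun i _ => ?_
  rw [hC, LinearMap.comp_apply]

variable [FiniteDimensional ℝ W]

lemma negTraceForm_self_eq_sum_norm_sq {C : Module.End ℝ W}
    (hC : ∀ u v : W, ⟪C u, v⟫ = -⟪u, C v⟫) :
    negTraceForm C C = ∑ i, ‖C (stdOrthonormalBasis ℝ W i)‖ ^ 2 := by
  simp only [negTraceForm_eq_sum_inner (stdOrthonormalBasis ℝ W) hC, real_inner_self_eq_norm_sq]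

lemma negTraceForm_self_pos {C : Module.End ℝ W} (hC : ∀ u v : W, ⟪C u, v⟫ = -⟪u, C v⟫)
    (hC₀ : C ≠ 0) : 0 < negTraceForm C C := by
  obtain ⟨i, hi⟩ : ∃ i, C (stdOrthonormalBasis ℝ W i) ≠ 0 := by
    by_contra! h
    exact hC₀ ((stdOrthonormalBasis ℝ W).toBasis.ext fun i => by simpa using h i)
  rw [negTraceForm_self_eq_sum_norm_sq hC]
  exact Finset.sum_pos' (fun _ _ => by positivity) ⟨i, Finset.mem_univ i, by positivity⟩

lemma negTraceForm_restrict_nondegenerate {U : Submodule ℝ (Module.End ℝ W)}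
    (hU : ∀ C ∈ U, ∀ u v : W, ⟪C u, v⟫ = -⟪u, C v⟫) :
    (negTraceForm.restrict U).Nondegenerate := by
  have hpos (C : U) (hC₀ : C ≠ 0) : 0 < negTraceForm.restrict U C C :=
    negTraceForm_self_pos (hU C C.2) (by simpa using hC₀)
  refine (LinearMap.BilinForm.nondegenerate_iff' _ (fun C => ?_) ?_).mpr hpos
  · obtain rfl | hC₀ := eq_or_ne C 0
    · simp
    · exact (hpos C hC₀).le
  · exact ⟨fun C D => negTraceForm_isSymm.eq (C : Module.End ℝ W) D⟩

lemma isCompl_negTraceForm_orthogonal {U : Submodule ℝ (Module.End ℝ W)}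
    (hU : ∀ C ∈ U, ∀ u v : W, ⟪C u, v⟫ = -⟪u, C v⟫) :
    IsCompl U (negTraceForm.orthogonal U) :=
  negTraceForm.isCompl_orthogonal_of_restrict_nondegenerate negTraceForm_isSymm.isRefl
    (negTraceForm_restrict_nondegenerate hU)

end NegTraceForm

/-- Let `𝔨` be a real Lie algebra, `𝔦 ⊆ 𝔨` an ideal (playing the role of `[p,p]`), and
`Φ : 𝔨 → so(p)` a linear map sending brackets to commutators, with each `Φ X` skew-symmetric.
If every skew-symmetric endomorphism `B` orthogonal to `Φ(𝔨)` with respect to the trace form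
`−tr(A∘B)` commutes with `Φ(𝔦)`, then `Φ(𝔦)` is an ideal of `so(p)`: the commutator of any
skew-symmetric endomorphism with an element of `Φ(𝔦)` lies in `Φ(𝔦)`. -/
theorem stmt19 {𝔨 : Type*} [LieRing 𝔨] [LieAlgebra ℝ 𝔨]
    {W : Type*} [NormedAddCommGroup W] [InnerProductSpace ℝ W] [FiniteDimensional ℝ W]
    (Φ : 𝔨 →ₗ[ℝ] W →ₗ[ℝ] W)
    (hΦskew : ∀ (X : 𝔨) (u v : W), ⟪Φ X u, v⟫ = -⟪u, Φ X v⟫)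
    (hΦlie : ∀ X Y : 𝔨, Φ ⁅X, Y⁆ = Φ X ∘ₗ Φ Y - Φ Y ∘ₗ Φ X)
    (𝔦 : LieIdeal ℝ 𝔨)
    (hcomm : ∀ B : W →ₗ[ℝ] W, (∀ u v : W, ⟪B u, v⟫ = -⟪u, B v⟫) →
      (∀ X : 𝔨, -LinearMap.trace ℝ W (B ∘ₗ Φ X) = 0) →
      ∀ Y ∈ 𝔦, B ∘ₗ Φ Y = Φ Y ∘ₗ B) :
    ∀ A : W →ₗ[ℝ] W, (∀ u v : W, ⟪A u, v⟫ = -⟪u, A v⟫) →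
      ∀ Y ∈ 𝔦, A ∘ₗ Φ Y - Φ Y ∘ₗ A ∈ Submodule.map Φ 𝔦.toSubmodule := by
  intro A hA Y hY
  have hsplit : LinearMap.range Φ ⊔ negTraceForm.orthogonal (LinearMap.range Φ) = ⊤ :=
    (isCompl_negTraceForm_orthogonal (by rintro _ ⟨X, rfl⟩; exact hΦskew X)).sup_eq_top
  obtain ⟨_, ⟨X, rfl⟩, C, hC, rfl⟩ := Submodule.mem_sup.mp (hsplit ▸ Submodule.mem_top : A ∈ _)
  have hCskew : ∀ u v : W, ⟪C u, v⟫ = -⟪u, C v⟫ := fun u v => by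
    have := hA u v
    simp only [LinearMap.add_apply, inner_add_left, inner_add_right, hΦskew X u v] at this
    linarith
  have hCorth (X' : 𝔨) : -LinearMap.trace ℝ W (C ∘ₗ Φ X') = 0 := by
    rw [← negTraceForm_apply, ← negTraceForm_isSymm.eq]
    exact hC (Φ X') ⟨X', rfl⟩
  refine ⟨⁅X, Y⁆, 𝔦.lie_mem hY, ?_⟩
  rw [hΦlie, LinearMap.add_comp, LinearMap.comp_add, hcomm C hCskew hCorth Y hY]
  abel
end
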